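/- With the Power-Rieffel type data of the previous construction (θ' ∈ (0,1), 0 < ε < θ', θ' + ε < 1, d continuous with d(0)=0, d(ε)=1, and p_0, p_1 defined as there), the integral ∫_0^1 p_0(x) dx equals θ'. In particular the canonical trace of the associated projection equals θ'. -/
import Mathlib


theorem stmt4 (θ' ε : ℝ) (hθ'0 : 0 < θ') (hθ'1 : θ' < 1)
    (hε : 0 < ε) (hεθ : ε < θ') (hsum : θ' + ε < 1)
    (d : ℝ → ℝ) (hdc : ContinuousOn d (Set.Icc 0 ε))
    (hd0 : d 0 = 0) (hdε : d ε = 1)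
    (hdrange : ∀ x ∈ Set.Icc 0 ε, d x ∈ Set.Icc (0:ℝ) 1)
    (p₀ p₁ : ℝ → ℝ)
    (hp₀per : Function.Periodic p₀ 1) (hp₁per : Function.Periodic p₁ 1)
    (hp₀c : Continuous p₀) (hp₁c : Continuous p₁)
    (h0a : ∀ x ∈ Set.Icc 0 ε, p₀ x = d x)
    (h0b : ∀ x ∈ Set.Ioo ε θ', p₀ x = 1)
    (h0c : ∀ x ∈ Set.Icc θ' (θ' + ε), p₀ x = 1 - d (x - θ'))
    (h0d : ∀ x ∈ Set.Ioo (θ' + ε) 1, p₀ x = 0)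
    (h1a : ∀ x ∈ Set.Icc 0 ε, p₁ x = Real.sqrt (d x * (1 - d x)))
    (h1b : ∀ x ∈ Set.Ico (0:ℝ) 1, x ∉ Set.Icc 0 ε → p₁ x = 0) :
    ∫ x in (0:ℝ)..1, p₀ x = θ' := by
  have hεle : (0:ℝ) ≤ ε := hε.le
  have hI : ∀ a b : ℝ, IntervalIntegrable p₀ MeasureTheory.volume a b :=
    fun a b => hp₀c.intervalIntegrable a b
  -- split
  have hsplit : ∫ x in (0:ℝ)..1, p₀ x =
      (∫ x in (0:ℝ)..ε, p₀ x) + (∫ x in ε..θ', p₀ x) +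
      (∫ x in θ'..(θ'+ε), p₀ x) + (∫ x in (θ'+ε)..1, p₀ x) := by
    rw [intervalIntegral.integral_add_adjacent_intervals (hI 0 ε) (hI ε θ'),
      intervalIntegral.integral_add_adjacent_intervals (hI 0 θ') (hI θ' (θ'+ε)),
      intervalIntegral.integral_add_adjacent_intervals (hI 0 (θ'+ε)) (hI (θ'+ε) 1)]
  -- piece 1
  have e1 : ∫ x in (0:ℝ)..ε, p₀ x = ∫ x in (0:ℝ)..ε, d x := by
    apply intervalIntegral.integral_congr
    intro x hx
    exact h0a x (by rwa [Set.uIcc_of_le hεle] at hx)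
  -- piece 2 : p₀ = 1 on Icc ε θ' by continuity
  have e2 : ∫ x in ε..θ', p₀ x = θ' - ε := by
    have heq : Set.EqOn p₀ (fun _ => (1:ℝ)) (Set.Icc ε θ') := by
      have := (Set.EqOn.closure (fun x hx => h0b x hx) hp₀c continuous_const)
      rwa [closure_Ioo hεθ.ne] at this
    rw [intervalIntegral.integral_congr (by rwa [Set.uIcc_of_le hεθ.le])]
    simp
  -- piece 3
  have e3 : ∫ x in θ'..(θ'+ε), p₀ x = ε - ∫ x in (0:ℝ)..ε, d x := by
    have : ∫ x in θ'..(θ'+ε), p₀ x = ∫ x in θ'..(θ'+ε), (1 - d (x - θ')) := by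
      apply intervalIntegral.integral_congr
      intro x hx
      exact h0c x (by rwa [Set.uIcc_of_le (by linarith)] at hx)
    rw [this]
    have hcomp : (∫ x in θ'..(θ'+ε), (fun y => 1 - d y) (x - θ')) =
        ∫ x in (θ' - θ')..(θ' + ε - θ'), (1 - d x) :=
      intervalIntegral.integral_comp_sub_right (fun y => 1 - d y) θ'
    simp only at hcomp
    rw [hcomp]
    have h0 : θ' - θ' = (0:ℝ) := by ring
    have h1 : θ' + ε - θ' = ε := by ring
    rw [h0, h1]
    have hdint : IntervalIntegrable d MeasureTheory.volume 0 ε := by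
      apply ContinuousOn.intervalIntegrable
      rwa [Set.uIcc_of_le hεle]
    rw [intervalIntegral.integral_sub (intervalIntegrable_const) hdint]
    simp
  -- piece 4
  have e4 : ∫ x in (θ'+ε)..1, p₀ x = 0 := by
    have heq : Set.EqOn p₀ (fun _ => (0:ℝ)) (Set.Icc (θ'+ε) 1) := by
      have := (Set.EqOn.closure (fun x hx => h0d x hx) hp₀c continuous_const)
      rwa [closure_Ioo hsum.ne] at this
    rw [intervalIntegral.integral_congr (by rwa [Set.uIcc_of_le hsum.le])]
    simp
  rw [hsplit, e1, e2, e3, e4]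
  ring
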